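/- Let A⁽¹⁾, …, A⁽ᵏ⁾ be 3×3 pairwise comparison matrices, let w⁽ℓ⁾ be a positive eigenvector of A⁽ℓ⁾ for each ℓ, and let u be a positive eigenvector of the aggregate A⁽¹⁾ ⊕ ⋯ ⊕ A⁽ᵏ⁾. If w⁽ℓ⁾_i ≥ w⁽ℓ⁾_j for all ℓ = 1,…,k, then u_i ≥ u_j; moreover, if in addition w⁽ℓ⁾_i > w⁽ℓ⁾_j for at least one ℓ, then u_i > u_j. Hence the Eigenvector Method satisfies aggregation invariance when the number of alternatives is three. -/

import Mathlib

/-!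
Positive eigenvectors of a positive matrix are unique up to scaling. For a 3×3 pairwise comparison
matrix with `a = A 0 1`, `b = A 0 2`, `c = A 1 2`, the vector of row geometric means
`((ab)^⅓, (c/a)^⅓, (bc)^-⅓)` is an eigenvector, so the eigenvector ranks the alternatives exactly
as the row products do. The row products of the aggregate are the geometric means of the
individual row products, which are monotone in each of them.
-/

/-- A pairwise comparison matrix: all entries positive and `A j i = 1 / A i j`. -/
def IsPCM {n : ℕ} (A : Matrix (Fin n) (Fin n) ℝ) : Prop :=
  (∀ i j, 0 < A i j) ∧ ∀ i j, A j i = 1 / A i j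

/-- The aggregate (entrywise geometric mean) of the pairwise comparison matrices
`A 0, …, A (k-1)`. -/
noncomputable def agg {n k : ℕ} (A : Fin k → Matrix (Fin n) (Fin n) ℝ) :
    Matrix (Fin n) (Fin n) ℝ :=
  Matrix.of fun i j => (∏ ℓ, A ℓ i j) ^ ((1 : ℝ) / k)

open Finset Matrix

section PositiveEigenvector

variable {ι : Type*} [Fintype ι] [Nonempty ι] {A : Matrix ι ι ℝ} {v w : ι → ℝ} {lam mu : ℝ}

lemma exists_le_mul_eq_mul_of_pos (hw : ∀ i, 0 < w i) (hv : ∀ i, 0 < v i) :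
    ∃ c > 0, ∃ i₀, (∀ i, w i ≤ c * v i) ∧ w i₀ = c * v i₀ := by
  obtain ⟨i₀, hi₀⟩ := Finite.exists_max fun i => w i / v i
  refine ⟨w i₀ / v i₀, div_pos (hw i₀) (hv i₀), i₀, fun i => ?_, ?_⟩
  · exact (div_le_iff₀ (hv i)).mp (hi₀ i)
  · field_simp [(hv i₀).ne']

lemma eigenvalue_le_of_pos_eigenvector (hA : ∀ i j, 0 < A i j) (hw : ∀ i, 0 < w i)
    (hv : ∀ i, 0 < v i) (h : A *ᵥ w = lam • w) (h' : A *ᵥ v = mu • v) : lam ≤ mu := by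
  obtain ⟨c, -, i₀, hle, heq⟩ := exists_le_mul_eq_mul_of_pos hw hv
  have hmono : (A *ᵥ w) i₀ ≤ c * (A *ᵥ v) i₀ := by
    simp only [mulVec, dotProduct, mul_sum]
    refine sum_le_sum fun t _ => ?_
    nlinarith [hle t, hA i₀ t]
  rw [h, h'] at hmono
  simp only [Pi.smul_apply, smul_eq_mul] at hmono
  rw [mul_left_comm, ← heq] at hmono
  exact le_of_mul_le_mul_right hmono (hw i₀)

/-- With `c • v` the smallest multiple of `v` above `w`, the gap `c • v - w` is a nonnegative
eigenvector vanishing somewhere, hence zero because `A` is positive. -/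
lemma exists_pos_eq_smul_of_pos_eigenvector (hA : ∀ i j, 0 < A i j) (hw : ∀ i, 0 < w i)
    (hv : ∀ i, 0 < v i) (h : A *ᵥ w = lam • w) (h' : A *ᵥ v = mu • v) :
    ∃ c > (0 : ℝ), w = c • v := by
  obtain rfl : lam = mu := le_antisymm (eigenvalue_le_of_pos_eigenvector hA hw hv h h')
    (eigenvalue_le_of_pos_eigenvector hA hv hw h' h)
  obtain ⟨c, hc, i₀, hle, heq⟩ := exists_le_mul_eq_mul_of_pos hw hv
  set z := c • v - w
  have hz : ∀ t, 0 ≤ z t := fun t => by simp [z, hle t]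
  have hAz : (A *ᵥ z) i₀ = 0 := by
    simp only [z, mulVec_sub, mulVec_smul, h, h', heq, Pi.sub_apply, Pi.smul_apply, smul_eq_mul]
    ring
  simp only [mulVec, dotProduct] at hAz
  have hz0 : ∀ t, z t = 0 := fun t =>
    (mul_eq_zero.mp ((sum_eq_zero_iff_of_nonneg fun t _ => mul_nonneg (hA i₀ t).le (hz t)).mp
      hAz t (mem_univ t))).resolve_left (hA i₀ t).ne'
  refine ⟨c, hc, funext fun t => ?_⟩
  have := hz0 t
  simp only [z, Pi.sub_apply, Pi.smul_apply, smul_eq_mul] at this ⊢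
  linarith

end PositiveEigenvector

namespace IsPCM

variable {n : ℕ}

lemma diag_eq_one {A : Matrix (Fin n) (Fin n) ℝ} (hA : IsPCM A) (i : Fin n) : A i i = 1 := by
  have h := hA.2 i i
  have hpos := hA.1 i i
  field_simp at h
  nlinarith

lemma agg {k : ℕ} {A : Fin k → Matrix (Fin n) (Fin n) ℝ} (hA : ∀ ℓ, IsPCM (A ℓ)) :
    IsPCM (agg A) := by
  refine ⟨fun i j => Real.rpow_pos_of_pos (prod_pos fun ℓ _ => (hA ℓ).1 i j) _, fun i j => ?_⟩
  have hprod : ∏ ℓ, A ℓ j i = (∏ ℓ, A ℓ i j)⁻¹ := by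
    rw [← prod_inv_distrib]
    exact prod_congr rfl fun ℓ _ => by rw [(hA ℓ).2 i j, one_div]
  simp only [_root_.agg, of_apply, hprod, one_div,
    Real.inv_rpow (prod_pos fun ℓ _ => (hA ℓ).1 i j).le]

lemma exists_pos_eigenvector_pow_three_eq_prod {A : Matrix (Fin 3) (Fin 3) ℝ} (hA : IsPCM A) :
    ∃ v : Fin 3 → ℝ,
      (∀ i, 0 < v i) ∧ (∃ lam : ℝ, A *ᵥ v = lam • v) ∧ ∀ i, v i ^ 3 = ∏ t, A i t := by
  have hcube : ∀ x : ℝ, 0 < x → ∃ y > 0, y ^ 3 = x := fun x hx =>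
    ⟨x ^ ((3 : ℕ) : ℝ)⁻¹, Real.rpow_pos_of_pos hx _, Real.rpow_inv_natCast_pow hx.le three_ne_zero⟩
  obtain ⟨α, hα, ha⟩ := hcube (A 0 1) (hA.1 0 1)
  obtain ⟨β, hβ, hb⟩ := hcube (A 0 2) (hA.1 0 2)
  obtain ⟨γ, hγ, hc⟩ := hcube (A 1 2) (hA.1 1 2)
  have hA_eq : A = !![1, α ^ 3, β ^ 3; 1 / α ^ 3, 1, γ ^ 3; 1 / β ^ 3, 1 / γ ^ 3, 1] := by
    ext i j
    fin_cases i <;> fin_cases j <;> simp [hA.diag_eq_one, hA.2 0 1, hA.2 0 2, hA.2 1 2, ha, hb, hc]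
  subst hA_eq
  refine ⟨![α * β, γ / α, 1 / (β * γ)], ?_, ⟨1 + α * γ / β + β / (α * γ), ?_⟩, ?_⟩
  · intro i
    fin_cases i <;> simp only [one_div, Fin.zero_eta, Fin.mk_one, Fin.reduceFinMk, Fin.isValue,
      cons_val_zero, cons_val_one, Matrix.cons_val] <;> positivity
  · ext i
    fin_cases i <;> simp only [mulVec, dotProduct, Fin.sum_univ_three, Pi.smul_apply, smul_eq_mul,
      one_mul, Fin.zero_eta, Fin.mk_one, Fin.reduceFinMk, Fin.isValue, cons_val',
      cons_val_zero, cons_val_one, Matrix.cons_val, cons_val_fin_one, of_apply] <;>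
      field_simp <;> ring
  · intro i
    fin_cases i <;> simp only [Fin.prod_univ_three, one_mul, mul_one, Fin.zero_eta, Fin.mk_one,
      Fin.reduceFinMk, Fin.isValue, cons_val',
      cons_val_zero, cons_val_one, Matrix.cons_val, cons_val_fin_one, of_apply] <;> field_simp

variable {A : Matrix (Fin 3) (Fin 3) ℝ} {w : Fin 3 → ℝ} {lam : ℝ}

lemma exists_pos_eigenvector_pow_three_eq_mul_prod (hA : IsPCM A) (hw : ∀ i, 0 < w i)
    (h : A *ᵥ w = lam • w) : ∃ s > (0 : ℝ), ∀ i, w i ^ 3 = s * ∏ t, A i t := by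
  obtain ⟨v, hv, ⟨mu, h'⟩, hv3⟩ := hA.exists_pos_eigenvector_pow_three_eq_prod
  obtain ⟨c, hc, rfl⟩ := exists_pos_eq_smul_of_pos_eigenvector hA.1 hw hv h h'
  exact ⟨c ^ 3, pow_pos hc 3, fun i => by simp [mul_pow, hv3]⟩

lemma eigenvector_le_iff (hA : IsPCM A) (hw : ∀ i, 0 < w i) (h : A *ᵥ w = lam • w)
    (i j : Fin 3) : w j ≤ w i ↔ ∏ t, A j t ≤ ∏ t, A i t := by
  obtain ⟨s, hs, hw3⟩ := hA.exists_pos_eigenvector_pow_three_eq_mul_prod hw h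
  rw [← pow_le_pow_iff_left₀ (hw j).le (hw i).le three_ne_zero, hw3, hw3,
    mul_le_mul_iff_right₀ hs]

lemma eigenvector_lt_iff (hA : IsPCM A) (hw : ∀ i, 0 < w i) (h : A *ᵥ w = lam • w)
    (i j : Fin 3) : w j < w i ↔ ∏ t, A j t < ∏ t, A i t := by
  obtain ⟨s, hs, hw3⟩ := hA.exists_pos_eigenvector_pow_three_eq_mul_prod hw h
  rw [← pow_lt_pow_iff_left₀ (hw j).le (hw i).le three_ne_zero, hw3, hw3,
    mul_lt_mul_iff_right₀ hs]

end IsPCM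

lemma prod_agg_row {n k : ℕ} {A : Fin k → Matrix (Fin n) (Fin n) ℝ} (hA : ∀ ℓ i j, 0 ≤ A ℓ i j)
    (i : Fin n) : ∏ t, agg A i t = (∏ ℓ, ∏ t, A ℓ i t) ^ ((1 : ℝ) / k) := by
  rw [prod_comm]
  exact Real.finsetProd_rpow _ _ (fun t _ => prod_nonneg fun ℓ _ => hA ℓ i t) _

theorem em_aggregation_invariant_three_general {k : ℕ}
    (A : Fin k → Matrix (Fin 3) (Fin 3) ℝ) (hA : ∀ ℓ, IsPCM (A ℓ))
    (w : Fin k → Fin 3 → ℝ) (hw : ∀ ℓ i, 0 < w ℓ i)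
    (lam : Fin k → ℝ) (heig : ∀ ℓ, (A ℓ).mulVec (w ℓ) = lam ℓ • w ℓ)
    (u : Fin 3 → ℝ) (hu : ∀ i, 0 < u i)
    (mu : ℝ) (hueig : (agg A).mulVec u = mu • u)
    (i j : Fin 3) (hij : ∀ ℓ, w ℓ j ≤ w ℓ i) :
    u j ≤ u i ∧ ((∃ ℓ, w ℓ j < w ℓ i) → u j < u i) := by
  have hAgg := IsPCM.agg hA
  have hrow_pos : ∀ ℓ, 0 < ∏ t, A ℓ j t := fun ℓ => prod_pos fun t _ => (hA ℓ).1 j t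
  have hrow_le : ∀ ℓ, ∏ t, A ℓ j t ≤ ∏ t, A ℓ i t := fun ℓ =>
    ((hA ℓ).eigenvector_le_iff (hw ℓ) (heig ℓ) i j).1 (hij ℓ)
  have hnonneg : ∀ ℓ i j, 0 ≤ A ℓ i j := fun ℓ a b => ((hA ℓ).1 a b).le
  rw [hAgg.eigenvector_le_iff hu hueig, hAgg.eigenvector_lt_iff hu hueig,
    prod_agg_row hnonneg, prod_agg_row hnonneg]
  have hprod_nonneg : 0 ≤ ∏ ℓ, ∏ t, A ℓ j t := prod_nonneg fun ℓ _ => (hrow_pos ℓ).le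
  refine ⟨Real.rpow_le_rpow hprod_nonneg (prod_le_prod (fun ℓ _ => (hrow_pos ℓ).le)
    fun ℓ _ => hrow_le ℓ) (by positivity), ?_⟩
  rintro ⟨ℓ, hℓ⟩
  have hk : (0 : ℝ) < 1 / k := by have := ℓ.pos; positivity
  exact Real.rpow_lt_rpow hprod_nonneg (prod_lt_prod (fun ℓ _ => hrow_pos ℓ)
    (fun ℓ _ => hrow_le ℓ) ⟨ℓ, mem_univ ℓ, ((hA ℓ).eigenvector_lt_iff (hw ℓ) (heig ℓ) i j).1 hℓ⟩) hk

/-- The Eigenvector Method satisfies aggregation invariance for three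
alternatives: if `w ℓ` is a positive eigenvector of the 3×3 pairwise comparison
matrix `A ℓ` for each `ℓ` and `u` is a positive eigenvector of the aggregate,
then `w ℓ i ≥ w ℓ j` for all `ℓ` implies `u i ≥ u j`, strictly so if the
inequality is strict for at least one `ℓ`. -/
theorem em_aggregation_invariant_three {k : ℕ} (hk : 0 < k)
    (A : Fin k → Matrix (Fin 3) (Fin 3) ℝ) (hA : ∀ ℓ, IsPCM (A ℓ))
    (w : Fin k → Fin 3 → ℝ) (hw : ∀ ℓ i, 0 < w ℓ i)
    (lam : Fin k → ℝ) (heig : ∀ ℓ, (A ℓ).mulVec (w ℓ) = lam ℓ • w ℓ)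
    (u : Fin 3 → ℝ) (hu : ∀ i, 0 < u i)
    (mu : ℝ) (hueig : (agg A).mulVec u = mu • u)
    (i j : Fin 3) (hij : ∀ ℓ, w ℓ j ≤ w ℓ i) :
    u j ≤ u i ∧ ((∃ ℓ, w ℓ j < w ℓ i) → u j < u i) :=
  em_aggregation_invariant_three_general A hA w hw lam heig u hu mu hueig i j hij
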